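/- arXiv:2011.06343 — 2 statements merged into one kernel-verified Lean document; each statement's English description precedes it below -/
import Mathlib

section
/- Let R, l > 0 and let u be a unit vector in three-dimensional Euclidean space (EuclideanSpace ℝ (Fin 3), ‖u‖ = 1). Then the Lebesgue measure of the set {x | ∃ t ∈ [0, l], x + t·u ∈ closedBall 0 R} equals (4/3)πR³ + πR²l (the volume of the capsule, i.e. the Minkowski sum of the ball of radius R with a segment of length l). -/
/-!
Split the space orthogonally as `ℝ ∙ u ⊕ (ℝ ∙ u)ᗮ`, writing `x = (s, y)`. Then `x + t • u` lies in
the ball for some `t ∈ [0, l]` iff `d(s)² + ‖y‖² ≤ R²`, where `d(s)` is the distance from `s` to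
`[-l, 0]`, so by Fubini the volume is `∫ A (d s) ds` with `A r` the volume of the slice at height
`r`. Cutting the line at `-l` and `0` and translating the left piece by `l` gives
`∫ A (d s) ds = ∫ A |s| ds + l * A 0`; the first term is the volume of the ball (the case `l = 0`)
and `A 0` is the volume of the `R`-ball of `(ℝ ∙ u)ᗮ`.
-/

open Metric MeasureTheory Set
open scoped ENNReal RealInnerProductSpace

/-- The distance from `s` to the segment `[-l, 0]`, when `0 ≤ l`. -/
noncomputable def segDist (l s : ℝ) : ℝ := max (max s (-(s + l))) 0

namespace segDist

variable {l s : ℝ}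

@[fun_prop]
lemma continuous (l : ℝ) : Continuous (segDist l) := by unfold segDist; fun_prop

lemma nonneg (l s : ℝ) : 0 ≤ segDist l s := le_max_right _ _

lemma zero_left (s : ℝ) : segDist 0 s = |s| := by unfold segDist; grind

lemma of_nonneg (hl : 0 ≤ l) (hs : 0 ≤ s) : segDist l s = s := by unfold segDist; grind

lemma of_le_neg (hl : 0 ≤ l) (hs : s ≤ -l) : segDist l s = |s + l| := by unfold segDist; grind

lemma of_mem_Icc (hs : s ∈ Icc (-l) 0) : segDist l s = 0 := by unfold segDist; grind

lemma le_abs_add {t : ℝ} (ht : t ∈ Icc 0 l) : segDist l s ≤ |s + t| := by unfold segDist; grind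

lemma exists_abs_add_eq (hl : 0 ≤ l) (s : ℝ) : ∃ t ∈ Icc 0 l, |s + t| = segDist l s := by
  rcases le_total 0 s with hs | hs
  · exact ⟨0, left_mem_Icc.2 hl, by simp [of_nonneg hl hs, abs_of_nonneg hs]⟩
  rcases le_total s (-l) with hsl | hsl
  · exact ⟨l, right_mem_Icc.2 hl, (of_le_neg hl hsl).symm⟩
  · exact ⟨-s, ⟨by linarith, by linarith⟩, by simp [of_mem_Icc ⟨hsl, hs⟩]⟩

end segDist

lemma lintegral_comp_segDist {l : ℝ} (hl : 0 ≤ l) (g : ℝ → ℝ≥0∞) :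
    ∫⁻ s, g (segDist l s) = (∫⁻ s, g |s|) + ENNReal.ofReal l * g 0 := by
  have h_left : ∫⁻ s in Iic (-l), g (segDist l s) = ∫⁻ s in Iic 0, g |s| := by
    rw [← (measurePreserving_add_right volume l).setLIntegral_comp_preimage_emb
      (measurableEmbedding_addRight l) (fun s => g |s|) (Iic 0), preimage_add_const_Iic, zero_sub]
    exact setLIntegral_congr_fun measurableSet_Iic fun s hs => by rw [segDist.of_le_neg hl hs]
  have h_mid : ∫⁻ s in Ioc (-l) 0, g (segDist l s) = ENNReal.ofReal l * g 0 := by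
    rw [setLIntegral_congr_fun measurableSet_Ioc fun s hs => by
      rw [segDist.of_mem_Icc (Ioc_subset_Icc_self hs)], setLIntegral_const, Real.volume_Ioc,
      zero_sub, neg_neg, mul_comm]
  have h_right : ∫⁻ s in Ioi 0, g (segDist l s) = ∫⁻ s in Ioi 0, g |s| :=
    setLIntegral_congr_fun measurableSet_Ioi fun s hs => by
      rw [segDist.of_nonneg hl hs.le, abs_of_pos hs]
  calc ∫⁻ s, g (segDist l s)
      = (∫⁻ s in Iic (-l), g (segDist l s)) + (∫⁻ s in Ioc (-l) 0, g (segDist l s))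
          + ∫⁻ s in Ioi 0, g (segDist l s) := by
        rw [← lintegral_union measurableSet_Ioc (Iic_disjoint_Ioc le_rfl),
          Iic_union_Ioc_eq_Iic (neg_nonpos.2 hl),
          ← lintegral_union measurableSet_Ioi (Iic_disjoint_Ioi le_rfl), Iic_union_Ioi,
          setLIntegral_univ]
    _ = (∫⁻ s in Iic 0, g |s|) + (∫⁻ s in Ioi 0, g |s|) + ENNReal.ofReal l * g 0 := by
        rw [h_left, h_mid, h_right, add_right_comm]
    _ = (∫⁻ s, g |s|) + ENNReal.ofReal l * g 0 := by
        rw [← lintegral_union measurableSet_Ioi (Iic_disjoint_Ioi le_rfl), Iic_union_Ioi,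
          setLIntegral_univ]

section InnerProductSpace

variable {E : Type*} [NormedAddCommGroup E] [InnerProductSpace ℝ E]

def hittingSet (u : E) (l R : ℝ) : Set E := {x | ∃ t ∈ Icc 0 l, x + t • u ∈ closedBall 0 R}

lemma hittingSet_zero (u : E) (R : ℝ) : hittingSet u 0 R = closedBall 0 R := by
  ext x
  simp [hittingSet]

lemma norm_add_smul_sq {u : E} (hu : ‖u‖ = 1) (x : E) (t : ℝ) :
    ‖x + t • u‖ ^ 2 = (⟪u, x⟫ + t) ^ 2 + ‖(ℝ ∙ u)ᗮ.orthogonalProjectionOnto x‖ ^ 2 := by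
  have h_span : ‖(ℝ ∙ u).orthogonalProjectionOnto x‖ = |⟪u, x⟫| := by
    rw [Submodule.coe_norm, ← Submodule.starProjection_apply,
      Submodule.starProjection_unit_singleton ℝ hu, norm_smul, hu, mul_one, Real.norm_eq_abs]
  have h_pythagoras := (ℝ ∙ u).norm_sq_eq_add_norm_sq_projection x
  rw [h_span, sq_abs] at h_pythagoras
  rw [norm_add_sq_real, inner_smul_right, norm_smul, hu, real_inner_comm, Real.norm_eq_abs,
    mul_one, sq_abs]
  linear_combination h_pythagoras

lemma mem_hittingSet_iff {u : E} (hu : ‖u‖ = 1) {l R : ℝ} (hl : 0 ≤ l) (hR : 0 ≤ R) (x : E) :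
    x ∈ hittingSet u l R ↔
      segDist l ⟪u, x⟫ ^ 2 + ‖(ℝ ∙ u)ᗮ.orthogonalProjectionOnto x‖ ^ 2 ≤ R ^ 2 := by
  have h_mem (t : ℝ) : x + t • u ∈ closedBall 0 R ↔
      |⟪u, x⟫ + t| ^ 2 + ‖(ℝ ∙ u)ᗮ.orthogonalProjectionOnto x‖ ^ 2 ≤ R ^ 2 := by
    rw [mem_closedBall_zero_iff, ← pow_le_pow_iff_left₀ (norm_nonneg _) hR two_ne_zero,
      norm_add_smul_sq hu, sq_abs]
  simp only [hittingSet, mem_ofPred_eq, h_mem]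
  constructor
  · rintro ⟨t, ht, h⟩
    have := pow_le_pow_left₀ (segDist.nonneg l ⟪u, x⟫) (segDist.le_abs_add ht) 2
    linarith
  · intro h
    obtain ⟨t, ht, h_eq⟩ := segDist.exists_abs_add_eq hl ⟪u, x⟫
    exact ⟨t, ht, h_eq ▸ h⟩

lemma toSpanUnitSingleton_symm_orthogonalProjectionOnto {u : E} (hu : ‖u‖ = 1) (x : E) :
    (LinearIsometryEquiv.toSpanUnitSingleton u hu).symm ((ℝ ∙ u).orthogonalProjectionOnto x) =
      ⟪u, x⟫ := by
  rw [LinearIsometryEquiv.symm_apply_eq]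
  ext
  simp [Submodule.starProjection_unit_singleton ℝ hu]

variable [FiniteDimensional ℝ E] [MeasurableSpace E] [BorelSpace E]

lemma measurePreserving_inner_orthogonalProjectionOnto {u : E} (hu : ‖u‖ = 1) :
    MeasurePreserving (fun x : E => (⟪u, x⟫, (ℝ ∙ u)ᗮ.orthogonalProjectionOnto x)) := by
  have h := ((LinearIsometryEquiv.measurePreserving
    (LinearIsometryEquiv.toSpanUnitSingleton u hu).symm).prod (MeasurePreserving.id volume)).comp
    ((WithLp.volume_preserving_ofLp _ _).comp
      (LinearIsometryEquiv.measurePreserving (ℝ ∙ u).orthogonalDecomposition))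
  convert h using 1
  · ext x <;> simp [toSpanUnitSingleton_symm_orthogonalProjectionOnto hu]
  · exact Measure.volume_eq_prod _ _

lemma volume_hittingSet_eq_lintegral {u : E} (hu : ‖u‖ = 1) {l R : ℝ} (hl : 0 ≤ l) (hR : 0 ≤ R) :
    volume (hittingSet u l R) =
      ∫⁻ s, volume {y : (ℝ ∙ u)ᗮ | segDist l s ^ 2 + ‖y‖ ^ 2 ≤ R ^ 2} := by
  set U := {p : ℝ × (ℝ ∙ u)ᗮ | segDist l p.1 ^ 2 + ‖p.2‖ ^ 2 ≤ R ^ 2}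
  have hU : MeasurableSet U := (isClosed_le (by fun_prop) continuous_const).measurableSet
  have h_preimage : hittingSet u l R =
      (fun x : E => (⟪u, x⟫, (ℝ ∙ u)ᗮ.orthogonalProjectionOnto x)) ⁻¹' U := by
    ext x
    exact mem_hittingSet_iff hu hl hR x
  rw [h_preimage,
    (measurePreserving_inner_orthogonalProjectionOnto hu).measure_preimage hU.nullMeasurableSet,
    Measure.volume_eq_prod, Measure.prod_apply hU]
  rfl

theorem volume_hittingSet {u : E} (hu : ‖u‖ = 1) {l R : ℝ} (hl : 0 ≤ l) (hR : 0 ≤ R) :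
    volume (hittingSet u l R) =
      volume (closedBall (0 : E) R) + ENNReal.ofReal l * volume (closedBall (0 : (ℝ ∙ u)ᗮ) R) := by
  have h_ball : {y : (ℝ ∙ u)ᗮ | 0 ^ 2 + ‖y‖ ^ 2 ≤ R ^ 2} = closedBall 0 R := by
    ext y
    rw [mem_closedBall_zero_iff, ← pow_le_pow_iff_left₀ (norm_nonneg y) hR two_ne_zero]
    simp
  rw [volume_hittingSet_eq_lintegral hu hl hR,
    lintegral_comp_segDist hl fun r => volume {y : (ℝ ∙ u)ᗮ | r ^ 2 + ‖y‖ ^ 2 ≤ R ^ 2},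
    ← hittingSet_zero u R, volume_hittingSet_eq_lintegral hu le_rfl hR]
  simp only [segDist.zero_left, sq_abs, h_ball]

end InnerProductSpace

lemma volume_closedBall_of_finrank_eq_two {F : Type*} [NormedAddCommGroup F]
    [InnerProductSpace ℝ F] [FiniteDimensional ℝ F] [MeasurableSpace F] [BorelSpace F]
    (hF : Module.finrank ℝ F = 2) (x : F) (r : ℝ) :
    volume (closedBall x r) = ENNReal.ofReal r ^ 2 * ENNReal.ofReal Real.pi := by
  have : Nontrivial F := Module.nontrivial_of_finrank_eq_succ hF
  rw [InnerProductSpace.volume_closedBall, hF]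
  norm_num [Real.sq_sqrt Real.pi_nonneg]

theorem segment_hitting_measure_ball
    (R l : ℝ) (hR : 0 < R) (hl : 0 < l)
    (u : EuclideanSpace ℝ (Fin 3)) (hu : ‖u‖ = 1) :
    volume {x : EuclideanSpace ℝ (Fin 3) |
        ∃ t ∈ Set.Icc (0 : ℝ) l, x + t • u ∈ closedBall (0 : EuclideanSpace ℝ (Fin 3)) R}
      = ENNReal.ofReal ((4 / 3) * Real.pi * R ^ 3 + Real.pi * R ^ 2 * l) := by
  have : Fact (Module.finrank ℝ (EuclideanSpace ℝ (Fin 3)) = 2 + 1) := ⟨by simp⟩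
  have h_perp : Module.finrank ℝ (ℝ ∙ u)ᗮ = 2 :=
    Submodule.finrank_orthogonal_span_singleton (norm_ne_zero_iff.1 (by simp [hu]))
  change volume (hittingSet u l R) = _
  rw [volume_hittingSet hu hl.le hR.le, EuclideanSpace.volume_closedBall_fin_three,
    volume_closedBall_of_finrank_eq_two h_perp, ← ENNReal.ofReal_pow hR.le,
    ← ENNReal.ofReal_pow hR.le, ← ENNReal.ofReal_mul (by positivity),
    ← ENNReal.ofReal_mul (sq_nonneg R), ← ENNReal.ofReal_mul hl.le,
    ← ENNReal.ofReal_add (by positivity) (by positivity)]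
  congr 1
  ring
end

section
/- Let R, l > 0 and let u be a unit vector in three-dimensional Euclidean space (EuclideanSpace ℝ (Fin 3), ‖u‖ = 1). Let N = ∫ over x ∈ ℝ³ of the one-dimensional Lebesgue measure of {t ∈ [0, l] : x + t·u ∈ closedBall 0 R}, and let D = the Lebesgue measure of {x | ∃ t ∈ [0, l], x + t·u ∈ closedBall 0 R}. Then N/D = (1/l + 3/(4R))⁻¹; that is, the mean length ⟨L⟩ traversed inside the ball by uniformly placed segments of length l satisfies 1/⟨L⟩ = 1/l + 1/⟨σ⟩ with mean chord ⟨σ⟩ = 4R/3. -/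
/-!
Translation invariance and Fubini give `N = vol(B) · l`. For `D`, rotate `u` to the first basis
vector and slice the swept set along it: above a point `y` of the equatorial disk the slice is an
interval of length `l + 2√(R² - ‖y‖²)`, so `D = vol(B) + l · π R²`, the chord integral being the
case `l = 0`. Then `N / D = (4/3 π R³ l) / (4/3 π R³ + π R² l) = (1/l + 3/(4R))⁻¹`.
-/

open Metric MeasureTheory Set

lemma exists_mem_Icc_add_mem_Icc_iff {a b l s : ℝ} (hab : a ≤ b) (hl : 0 ≤ l) :
    (∃ t ∈ Icc 0 l, s + t ∈ Icc a b) ↔ s ∈ Icc (a - l) b := by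
  constructor
  · rintro ⟨t, ⟨ht0, htl⟩, hsa, hsb⟩
    constructor <;> linarith
  · rintro ⟨hs₁, hs₂⟩
    refine ⟨max 0 (a - s), ⟨le_max_left _ _, max_le hl (by linarith)⟩, ?_, ?_⟩
    · linarith [le_max_right 0 (a - s)]
    · rcases max_cases 0 (a - s) with ⟨h, -⟩ | ⟨h, -⟩ <;> rw [h] <;> linarith

lemma sq_add_sq_le_sq_iff {r s R : ℝ} (hr : 0 ≤ r) (hR : 0 ≤ R) :
    r ^ 2 + s ^ 2 ≤ R ^ 2 ↔ r ≤ R ∧ s ∈ Icc (-√(R ^ 2 - r ^ 2)) √(R ^ 2 - r ^ 2) := by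
  constructor
  · intro h
    have hrR : r ≤ R := by nlinarith
    exact ⟨hrR, (Real.sq_le (by nlinarith)).mp (by linarith)⟩
  · rintro ⟨hrR, h⟩
    have := (Real.sq_le (by nlinarith)).mpr h
    linarith

theorem volume_region_between_cc_eq_lintegral {α : Type*} [MeasurableSpace α] {μ : Measure α}
    [SFinite μ] {f g : α → ℝ} {s : Set α} (hf : Measurable f) (hg : Measurable g)
    (hs : MeasurableSet s) :
    μ.prod volume {p : α × ℝ | p.1 ∈ s ∧ p.2 ∈ Icc (f p.1) (g p.1)} =
      ∫⁻ y in s, ENNReal.ofReal (g y - f y) ∂μ := by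
  rw [Measure.prod_apply (measurableSet_region_between_cc hf hg hs), ← lintegral_indicator hs]
  refine lintegral_congr fun y => ?_
  by_cases hy : y ∈ s
  · rw [indicator_of_mem hy, ← Real.volume_Icc]
    congr 1 with x
    simp [hy]
  · simp [hy]

section Sweep

variable {E : Type*} [NormedAddCommGroup E] [NormedSpace ℝ E]

def segmentSweep (K : Set E) (l : ℝ) (u : E) : Set E :=
  {x | ∃ t ∈ Icc (0 : ℝ) l, x + t • u ∈ K}

@[simp]
lemma segmentSweep_zero (K : Set E) (u : E) : segmentSweep K 0 u = K := by
  simp [segmentSweep]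

lemma preimage_segmentSweep {F G : Type*} [NormedAddCommGroup F] [NormedSpace ℝ F]
    [FunLike G E F] [LinearMapClass G ℝ E F] (φ : G) (K : Set F) (l : ℝ) (u : E) :
    φ ⁻¹' segmentSweep K l (φ u) = segmentSweep (φ ⁻¹' K) l u := by
  ext x
  simp [segmentSweep]

theorem lintegral_measure_setOf_mem_and_add_smul_mem [MeasurableSpace E] [BorelSpace E]
    [SecondCountableTopology E] (μ : Measure E) [SFinite μ] [μ.IsAddRightInvariant]
    (ν : Measure ℝ) [SFinite ν] {K : Set E} {T : Set ℝ} (hK : MeasurableSet K)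
    (hT : MeasurableSet T) (u : E) :
    ∫⁻ x, ν {t | t ∈ T ∧ x + t • u ∈ K} ∂μ = μ K * ν T := by
  set S : Set (E × ℝ) := {p | p.2 ∈ T ∧ p.1 + p.2 • u ∈ K}
  have hS : MeasurableSet S :=
    (measurable_snd hT).inter ((measurable_fst.add (measurable_snd.smul_const u)) hK)
  have slice : ∀ t, μ ((fun x => (x, t)) ⁻¹' S) = T.indicator (fun _ => μ K) t := by
    intro t
    by_cases ht : t ∈ T
    · rw [indicator_of_mem ht, ← measure_preimage_add_right μ (t • u) K]
      congr 1 with x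
      simp [S, ht]
    · simp [S, ht]
  calc ∫⁻ x, ν {t | t ∈ T ∧ x + t • u ∈ K} ∂μ = μ.prod ν S := (Measure.prod_apply hS).symm
    _ = ∫⁻ t, T.indicator (fun _ => μ K) t ∂ν := by
      rw [Measure.prod_apply_symm hS]
      exact lintegral_congr slice
    _ = μ K * ν T := lintegral_indicator_const hT _

end Sweep

theorem volume_segmentSweep_closedBall_eq_of_norm_eq {E : Type*} [NormedAddCommGroup E]
    [InnerProductSpace ℝ E] [FiniteDimensional ℝ E] [MeasurableSpace E] [BorelSpace E]
    (R l : ℝ) {u v : E} (h : ‖u‖ = ‖v‖) :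
    volume (segmentSweep (closedBall 0 R) l u) = volume (segmentSweep (closedBall 0 R) l v) := by
  set φ := Submodule.reflection (ℝ ∙ (u - v))ᗮ
  have hφ : φ u = v := Submodule.reflection_sub h
  calc volume (segmentSweep (closedBall 0 R) l u)
      = volume (φ ⁻¹' segmentSweep (closedBall 0 R) l v) := by
        rw [← hφ, preimage_segmentSweep, φ.preimage_closedBall, map_zero]
    _ = volume (segmentSweep (closedBall 0 R) l v) :=
        φ.measurePreserving.measure_preimage_equiv (f := φ.toMeasurableEquiv) _

def splitFirstCoord (n : ℕ) : EuclideanSpace ℝ (Fin (n + 1)) ≃ᵐ EuclideanSpace ℝ (Fin n) × ℝ :=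
  (MeasurableEquiv.toLp 2 (Fin (n + 1) → ℝ)).symm.trans <|
    (MeasurableEquiv.piFinSuccAbove (fun _ => ℝ) 0).trans <|
      MeasurableEquiv.prodComm.trans <|
        MeasurableEquiv.prodCongr (MeasurableEquiv.toLp 2 (Fin n → ℝ)) (MeasurableEquiv.refl ℝ)

namespace splitFirstCoord

variable {n : ℕ}

@[simp]
lemma apply (x : EuclideanSpace ℝ (Fin (n + 1))) :
    splitFirstCoord n x = (WithLp.toLp 2 fun i => x i.succ, x 0) :=
  rfl

lemma measurePreserving : MeasurePreserving (splitFirstCoord n) :=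
  (EuclideanSpace.volume_preserving_symm_measurableEquiv_toLp _).trans <|
    (volume_preserving_piFinSuccAbove _ 0).trans <|
      Measure.measurePreserving_swap.trans <|
        (PiLp.volume_preserving_toLp _).prod (MeasurePreserving.id _)

lemma norm_sq (x : EuclideanSpace ℝ (Fin (n + 1))) :
    ‖x‖ ^ 2 = ‖(splitFirstCoord n x).1‖ ^ 2 + (splitFirstCoord n x).2 ^ 2 := by
  simp [EuclideanSpace.norm_sq_eq, Fin.sum_univ_succ, add_comm]

lemma add_smul_single (x : EuclideanSpace ℝ (Fin (n + 1))) (t : ℝ) :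
    splitFirstCoord n (x + t • EuclideanSpace.single 0 1) =
      ((splitFirstCoord n x).1, (splitFirstCoord n x).2 + t) := by
  simp

end splitFirstCoord

section Ball

variable {n : ℕ} {R l : ℝ}

lemma segmentSweep_closedBall_single_eq_preimage (hR : 0 ≤ R) (hl : 0 ≤ l) :
    segmentSweep (closedBall (0 : EuclideanSpace ℝ (Fin (n + 1))) R) l
        (EuclideanSpace.single 0 1) =
      splitFirstCoord n ⁻¹' {p | p.1 ∈ closedBall 0 R ∧
        p.2 ∈ Icc (-√(R ^ 2 - ‖p.1‖ ^ 2) - l) √(R ^ 2 - ‖p.1‖ ^ 2)} := by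
  ext x
  set y := (splitFirstCoord n x).1
  set c := √(R ^ 2 - ‖y‖ ^ 2)
  have hc : -c ≤ c := neg_le_self (Real.sqrt_nonneg _)
  have mem_ball_iff : ∀ t : ℝ, x + t • EuclideanSpace.single 0 1 ∈ closedBall 0 R ↔
      y ∈ closedBall 0 R ∧ (splitFirstCoord n x).2 + t ∈ Icc (-c) c := by
    intro t
    rw [mem_closedBall_zero_iff, mem_closedBall_zero_iff, ← sq_le_sq₀ (norm_nonneg _) hR,
      splitFirstCoord.norm_sq, splitFirstCoord.add_smul_single,
      sq_add_sq_le_sq_iff (norm_nonneg _) hR]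
  simp only [segmentSweep, mem_ofPred_eq, mem_preimage, mem_ball_iff]
  constructor
  · rintro ⟨t, ht, hy, hst⟩
    exact ⟨hy, (exists_mem_Icc_add_mem_Icc_iff hc hl).mp ⟨t, ht, hst⟩⟩
  · rintro ⟨hy, hs⟩
    obtain ⟨t, ht, hst⟩ := (exists_mem_Icc_add_mem_Icc_iff hc hl).mpr hs
    exact ⟨t, ht, hy, hst⟩

lemma volume_segmentSweep_closedBall_single_eq_lintegral (hR : 0 ≤ R) (hl : 0 ≤ l) :
    volume (segmentSweep (closedBall (0 : EuclideanSpace ℝ (Fin (n + 1))) R) l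
        (EuclideanSpace.single 0 1)) =
      ∫⁻ y in closedBall (0 : EuclideanSpace ℝ (Fin n)) R,
        ENNReal.ofReal (2 * √(R ^ 2 - ‖y‖ ^ 2) + l) := by
  rw [segmentSweep_closedBall_single_eq_preimage hR hl,
    splitFirstCoord.measurePreserving.measure_preimage_equiv, Measure.volume_eq_prod]
  refine (volume_region_between_cc_eq_lintegral (f := fun y => -√(R ^ 2 - ‖y‖ ^ 2) - l)
    (g := fun y => √(R ^ 2 - ‖y‖ ^ 2)) (by fun_prop) (by fun_prop)
    measurableSet_closedBall).trans ?_
  congr! 3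
  ring

theorem volume_segmentSweep_closedBall_single (hR : 0 ≤ R) (hl : 0 ≤ l) :
    volume (segmentSweep (closedBall (0 : EuclideanSpace ℝ (Fin (n + 1))) R) l
        (EuclideanSpace.single 0 1)) =
      volume (closedBall (0 : EuclideanSpace ℝ (Fin (n + 1))) R) +
        ENNReal.ofReal l * volume (closedBall (0 : EuclideanSpace ℝ (Fin n)) R) := by
  have ball_eq_lintegral := volume_segmentSweep_closedBall_single_eq_lintegral (n := n) hR le_rfl
  simp_rw [segmentSweep_zero, add_zero] at ball_eq_lintegral
  calc _ = ∫⁻ y in closedBall (0 : EuclideanSpace ℝ (Fin n)) R,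
          ENNReal.ofReal (2 * √(R ^ 2 - ‖y‖ ^ 2)) + ENNReal.ofReal l := by
        rw [volume_segmentSweep_closedBall_single_eq_lintegral hR hl]
        exact setLIntegral_congr_fun measurableSet_closedBall
          fun y _ => ENNReal.ofReal_add (by positivity) hl
    _ = _ := by
        rw [lintegral_add_right _ measurable_const, setLIntegral_const, ball_eq_lintegral,
          mul_comm]

theorem volume_segmentSweep_closedBall (hR : 0 ≤ R) (hl : 0 ≤ l)
    {u : EuclideanSpace ℝ (Fin (n + 1))} (hu : ‖u‖ = 1) :
    volume (segmentSweep (closedBall 0 R) l u) =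
      volume (closedBall (0 : EuclideanSpace ℝ (Fin (n + 1))) R) +
        ENNReal.ofReal l * volume (closedBall (0 : EuclideanSpace ℝ (Fin n)) R) := by
  rw [volume_segmentSweep_closedBall_eq_of_norm_eq R l (v := EuclideanSpace.single 0 1)
    (by simp [hu]), volume_segmentSweep_closedBall_single hR hl]

end Ball

theorem cauchy_formula_segments_ball
    (R l : ℝ) (hR : 0 < R) (hl : 0 < l)
    (u : EuclideanSpace ℝ (Fin 3)) (hu : ‖u‖ = 1)
    (N D : ENNReal)
    (hN : N = ∫⁻ x : EuclideanSpace ℝ (Fin 3),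
        volume {t : ℝ | t ∈ Set.Icc (0 : ℝ) l ∧
          x + t • u ∈ closedBall (0 : EuclideanSpace ℝ (Fin 3)) R})
    (hD : D = volume {x : EuclideanSpace ℝ (Fin 3) |
        ∃ t ∈ Set.Icc (0 : ℝ) l,
          x + t • u ∈ closedBall (0 : EuclideanSpace ℝ (Fin 3)) R}) :
    N / D = ENNReal.ofReal ((1 / l + 3 / (4 * R))⁻¹) := by
  rw [lintegral_measure_setOf_mem_and_add_smul_mem volume volume measurableSet_closedBall
    measurableSet_Icc, Real.volume_Icc, sub_zero] at hN
  have hD' : D = _ := hD.trans (volume_segmentSweep_closedBall (n := 2) hR.le hl.le hu)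
  have ball₃ : volume (closedBall (0 : EuclideanSpace ℝ (Fin 3)) R) =
      ENNReal.ofReal (R ^ 3 * (Real.pi * 4 / 3)) := by
    rw [EuclideanSpace.volume_closedBall_fin_three, ENNReal.ofReal_mul (by positivity),
      ENNReal.ofReal_pow hR.le]
  have ball₂ : volume (closedBall (0 : EuclideanSpace ℝ (Fin 2)) R) =
      ENNReal.ofReal (R ^ 2 * Real.pi) := by
    rw [EuclideanSpace.volume_closedBall_fin_two, ENNReal.ofReal_mul (by positivity),
      ENNReal.ofReal_pow hR.le]
  rw [hN, hD', ball₃, ball₂, ← ENNReal.ofReal_mul (by positivity), ← ENNReal.ofReal_mul hl.le,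
    ← ENNReal.ofReal_add (by positivity) (by positivity),
    ← ENNReal.ofReal_div_of_pos (by positivity)]
  congr 1
  field_simp
end
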